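/- arXiv:2504.02427 — 3 statements merged into one kernel-verified Lean document; each statement's English description precedes it below -/
import Mathlib

section
/- Let π : A → B be a surjective map between nonempty finite sets, let p ∈ [0,1], let (X_b)_{b∈B} be independent Bernoulli(p) random variables, and let (S(b))_{b∈B} be arbitrary random variables on the same probability space with S(b) taking values in π⁻¹(b). Define Y_a = X_{π(a)} · 1[S(π(a)) = a] for every a ∈ A. Then the distribution of (Y_a)_{a∈A} is stochastically dominated by the product measure Bernoulli(p)^{⊗A} on {0,1}^A (with the product order). -/
open MeasureTheory ProbabilityTheory

/-- Bernoulli measure of parameter `p` on `Bool`. -/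
noncomputable def bern (p : ENNReal) : Measure Bool :=
  p • Measure.dirac true + (1 - p) • Measure.dirac false

/-- `μ` is stochastically dominated by `ν`: there is a coupling supported on `{(x,y) | x ≤ y}`. -/
def StochDom {E : Type*} [MeasurableSpace E] [Preorder E] (μ ν : Measure E) : Prop :=
  ∃ κ : Measure (E × E), IsProbabilityMeasure κ ∧ κ.map Prod.fst = μ ∧
    κ.map Prod.snd = ν ∧ κ {q | q.1 ≤ q.2} = 1

/-!
By Strassen's theorem on a finite preorder it suffices that `P (Y ∈ U) ≤ Bern(p)^A U` for every
upper set `U`. Strassen's theorem itself is proved by transferring mass from a point `x` to a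
point `y ≥ x`, as much as the upper-set inequalities allow: each transfer empties a point or makes
one more upper set tight, so finitely many transfers build the coupling.

If `Y ∈ U`, then `X` lies in `liftSet π U`, the set of `x` that some section `s` of `π` lifts
into `U`. Its `Bern(p)^B`-measure is bounded by `Bern(p)^A U` one fibre at a time: `X_b = 0`
puts nothing on the fibre `π⁻¹ b`, while `X_b = 1` switches on a single point of it, and a fresh
`Bern(p)` vector on the fibre switches that point on with probability `p` as well.
-/

open Finset
open scoped NNReal ENNReal

lemma sum_add_single {E : Type*} [DecidableEq E] (f : E → ℝ≥0) (x : E) (ε : ℝ≥0) (U : Finset E) :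
    ∑ z ∈ U, (f + Pi.single x ε : E → ℝ≥0) z = ∑ z ∈ U, f z + if x ∈ U then ε else 0 := by
  simp only [Pi.add_apply, sum_add_distrib, sum_pi_single']

lemma card_filter_lt_card_filter {α : Type*} [Fintype α] {p q : α → Prop} [DecidablePred p]
    [DecidablePred q] (hpq : ∀ a, p a → q a) {a : α} (hqa : q a) (hpa : ¬p a) :
    #{a | p a} < #{a | q a} :=
  card_lt_card ⟨monotone_filter_right univ fun a _ ↦ hpq a,
    fun h ↦ hpa (mem_filter.1 (h (by simpa))).2⟩

lemma exists_min_of_ne_zero {ι : Type*} {a b : ℝ≥0} (ha : a ≠ 0) (hb : b ≠ 0) (s : Finset ι)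
    (c : ι → ℝ≥0) (hc : ∀ i ∈ s, c i ≠ 0) :
    ∃ ε ≠ 0, ε ≤ a ∧ ε ≤ b ∧ (∀ i ∈ s, ε ≤ c i) ∧ (ε = a ∨ ε = b ∨ ∃ i ∈ s, ε = c i) := by
  classical
  set t := insert a (insert b (s.image c))
  have ht : t.Nonempty := insert_nonempty _ _
  have hct {i : ι} (hi : i ∈ s) : c i ∈ t := mem_insert_of_mem (mem_insert_of_mem
    (mem_image_of_mem c hi))
  refine ⟨t.min' ht, ?_, t.min'_le _ (by simp [t]), t.min'_le _ (by simp [t]),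
    fun i hi ↦ t.min'_le _ (hct hi), by simpa [t, eq_comm] using t.min'_mem ht⟩
  refine (pos_iff_ne_zero.1 ((t.lt_min'_iff ht).2 fun d hd ↦ ?_))
  simp only [t, mem_insert, mem_image] at hd
  rcases hd with rfl | rfl | ⟨i, hi, rfl⟩
  exacts [pos_iff_ne_zero.2 ha, pos_iff_ne_zero.2 hb, pos_iff_ne_zero.2 (hc i hi)]

section Transport

variable {E : Type*} [Preorder E]

lemma sum_union_eq_of_sum_eq [DecidableEq E] {f g : E → ℝ≥0}
    (hdom : ∀ U : Finset E, IsUpperSet (U : Set E) → ∑ z ∈ U, f z ≤ ∑ z ∈ U, g z)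
    {U V : Finset E} (hU : IsUpperSet (U : Set E)) (hV : IsUpperSet (V : Set E))
    (hUg : ∑ z ∈ U, f z = ∑ z ∈ U, g z) (hVg : ∑ z ∈ V, f z = ∑ z ∈ V, g z) :
    ∑ z ∈ U ∪ V, f z = ∑ z ∈ U ∪ V, g z := by
  have hunion := hdom (U ∪ V) (by rw [coe_union]; exact hU.union hV)
  have hinter := hdom (U ∩ V) (by rw [coe_inter]; exact hU.inter hV)
  refine ((add_eq_add_iff_eq_and_eq hunion hinter).1 ?_).1
  rw [sum_union_inter, sum_union_inter, hUg, hVg]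

lemma exists_le_forall_sum_lt [Fintype E] {f g : E → ℝ≥0}
    (hdom : ∀ U : Finset E, IsUpperSet (U : Set E) → ∑ z ∈ U, f z ≤ ∑ z ∈ U, g z)
    {x : E} (hx : f x ≠ 0) :
    ∃ y, x ≤ y ∧ g y ≠ 0 ∧ ∀ U : Finset E, IsUpperSet (U : Set E) → x ∉ U → y ∈ U →
      ∑ z ∈ U, f z < ∑ z ∈ U, g z := by
  classical
  by_contra! H
  let Tight (V : Finset E) : Prop :=
    IsUpperSet (V : Set E) ∧ x ∉ V ∧ ∑ z ∈ V, f z = ∑ z ∈ V, g z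
  -- The union `T` of the tight upper sets avoiding `x` is tight, and then `T ∪ Ici x`
  -- violates domination by the mass `f x`.
  set T := (univ.filter Tight).sup id
  obtain ⟨hT, hxT, hTeq⟩ : Tight T := by
    refine sup_induction (p := Tight)
      ⟨by rw [bot_eq_empty, coe_empty]; exact isUpperSet_empty, by simp, by simp⟩ ?_
      fun V hV ↦ (mem_filter.1 hV).2
    rintro V ⟨hV, hxV, hVeq⟩ W ⟨hW, hxW, hWeq⟩
    exact ⟨by rw [sup_eq_union, coe_union]; exact hV.union hW, by simp [hxV, hxW],
      sum_union_eq_of_sum_eq hdom hV hW hVeq hWeq⟩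
  have hg (y : E) (hxy : x ≤ y) (hyT : y ∉ T) : g y = 0 := by
    by_contra hy
    obtain ⟨U, hU, hxU, hyU, hle⟩ := H y hxy hy
    have hUT : U ≤ T :=
      le_sup (f := id) (mem_filter.2 ⟨mem_univ _, hU, hxU, (hdom U hU).antisymm hle⟩)
    exact hyT (hUT hyU)
  set V := T ∪ univ.filter (x ≤ ·)
  have hV : IsUpperSet (V : Set E) := by
    rw [coe_union]
    exact hT.union fun a b hab ha ↦ by simp_all [le_trans (b := a)]
  have hxV : x ∈ V \ T := by simp [V, hxT]
  have : ∑ z ∈ T, f z + f x ≤ ∑ z ∈ T, f z + 0 := calc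
    _ ≤ ∑ z ∈ T, f z + ∑ z ∈ V \ T, f z := add_le_add_right (single_le_sum (by simp) hxV) _
    _ = ∑ z ∈ V, f z := by rw [add_comm, sum_sdiff subset_union_left]
    _ ≤ ∑ z ∈ V, g z := hdom V hV
    _ = ∑ z ∈ T, g z := (sum_subset subset_union_left fun y hyV hyT ↦
          hg y (by simpa [V, hyT] using hyV) hyT).symm
    _ = _ := by rw [hTeq, add_zero]
  exact hx (nonpos_iff_eq_zero.1 (le_of_add_le_add_left this))

lemma sum_le_sum_of_add_single [DecidableEq E] {f g : E → ℝ≥0} {x y : E} {ε : ℝ≥0}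
    (hxy : x ≤ y)
    (hdom : ∀ U : Finset E, IsUpperSet (U : Set E) →
      ∑ z ∈ U, (f + Pi.single x ε : E → ℝ≥0) z ≤ ∑ z ∈ U, (g + Pi.single y ε : E → ℝ≥0) z)
    (hsep : ∀ U : Finset E, IsUpperSet (U : Set E) → x ∉ U → y ∈ U →
      ∑ z ∈ U, f z ≤ ∑ z ∈ U, g z)
    (U : Finset E) (hU : IsUpperSet (U : Set E)) : ∑ z ∈ U, f z ≤ ∑ z ∈ U, g z := by
  have h := hdom U hU
  rw [sum_add_single, sum_add_single] at h
  by_cases hyU : y ∈ U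
  · by_cases hxU : x ∈ U
    · simpa [hxU, hyU] using h
    · exact hsep U hU hxU hyU
  · have hxU : x ∉ U := fun hxU ↦ hyU (hU hxy hxU)
    simpa [hxU, hyU] using h

open Classical in
noncomputable def transportPotential [Fintype E] (f g : E → ℝ≥0) : ℕ :=
  #{x | f x ≠ 0} + #{x | g x ≠ 0} +
    #{U : Finset E | IsUpperSet (U : Set E) ∧ ∑ z ∈ U, f z < ∑ z ∈ U, g z}

lemma transportPotential_lt_add_single [Fintype E] [DecidableEq E] {f g : E → ℝ≥0} {x y : E}
    {ε : ℝ≥0} (hxy : x ≤ y) (hε : ε ≠ 0)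
    (hcases : f x = 0 ∨ g y = 0 ∨ ∃ U : Finset E, IsUpperSet (U : Set E) ∧ x ∉ U ∧ y ∈ U ∧
      ∑ z ∈ U, f z = ∑ z ∈ U, g z) :
    transportPotential f g <
      transportPotential (f + Pi.single x ε : E → ℝ≥0) (g + Pi.single y ε : E → ℝ≥0) := by
  classical
  have hsupp (f : E → ℝ≥0) (x z : E) (hz : f z ≠ 0) : (f + Pi.single x ε : E → ℝ≥0) z ≠ 0 := by
    simp [hz]
  have hslack (U : Finset E) : IsUpperSet (U : Set E) ∧ ∑ z ∈ U, f z < ∑ z ∈ U, g z →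
      IsUpperSet (U : Set E) ∧ ∑ z ∈ U, (f + Pi.single x ε : E → ℝ≥0) z <
        ∑ z ∈ U, (g + Pi.single y ε : E → ℝ≥0) z := by
    rintro ⟨hU, hlt⟩
    refine ⟨hU, ?_⟩
    rw [sum_add_single, sum_add_single]
    by_cases hyU : y ∈ U
    · by_cases hxU : x ∈ U
      · simpa [hxU, hyU] using hlt
      · simpa [hxU, hyU] using lt_of_lt_of_le hlt le_self_add
    · have hxU : x ∉ U := fun hxU ↦ hyU (hU hxy hxU)
      simpa [hxU, hyU] using hlt
  have hf := card_le_card (monotone_filter_right univ fun z _ ↦ hsupp f x z)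
  have hg := card_le_card (monotone_filter_right univ fun z _ ↦ hsupp g y z)
  have hU := card_le_card (monotone_filter_right univ fun U _ ↦ hslack U)
  unfold transportPotential
  rcases hcases with hfx | hgy | ⟨U, hU, hxU, hyU, hUeq⟩
  · have := card_filter_lt_card_filter (hsupp f x) (a := x) (by simp [hfx, hε]) (by simp [hfx])
    omega
  · have := card_filter_lt_card_filter (hsupp g y) (a := y) (by simp [hgy, hε]) (by simp [hgy])
    omega
  · have := card_filter_lt_card_filter hslack (a := U) ⟨hU, by
      rw [sum_add_single, sum_add_single]; simp [hxU, hyU, hUeq, pos_iff_ne_zero.2 hε]⟩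
      (by simp [hUeq])
    omega

lemma exists_transfer_step [Fintype E] [DecidableEq E] {f g : E → ℝ≥0} (htot : ∑ z, f z = ∑ z, g z)
    (hdom : ∀ U : Finset E, IsUpperSet (U : Set E) → ∑ z ∈ U, f z ≤ ∑ z ∈ U, g z) (hf : f ≠ 0) :
    ∃ x y ε f' g', x ≤ y ∧ f = f' + Pi.single x ε ∧ g = g' + Pi.single y ε ∧
      ∑ z, f' z = ∑ z, g' z ∧
      (∀ U : Finset E, IsUpperSet (U : Set E) → ∑ z ∈ U, f' z ≤ ∑ z ∈ U, g' z) ∧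
      transportPotential f' g' < transportPotential f g := by
  classical
  obtain ⟨x, hx⟩ := Function.ne_iff.1 hf
  obtain ⟨y, hxy, hy, hslack⟩ := exists_le_forall_sum_lt hdom hx
  set Sep : Finset (Finset E) := {U | IsUpperSet (U : Set E) ∧ x ∉ U ∧ y ∈ U}
  have hSep {U : Finset E} (hU : U ∈ Sep) : ∑ z ∈ U, f z < ∑ z ∈ U, g z := by
    simp only [Sep, mem_filter] at hU
    exact hslack U hU.2.1 hU.2.2.1 hU.2.2.2
  obtain ⟨ε, hε, hεf, hεg, hεU, hεcases⟩ := exists_min_of_ne_zero hx hy Sep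
    (fun U ↦ ∑ z ∈ U, g z - ∑ z ∈ U, f z) fun U hU ↦ (tsub_pos_of_lt (hSep hU)).ne'
  replace hεU (U : Finset E) (hU : U ∈ Sep) : ∑ z ∈ U, f z + ε ≤ ∑ z ∈ U, g z :=
    (le_tsub_iff_left (hSep hU).le).1 (hεU U hU)
  replace hεcases : ε = f x ∨ ε = g y ∨ ∃ U ∈ Sep, ∑ z ∈ U, f z + ε = ∑ z ∈ U, g z := by
    rcases hεcases with h | h | ⟨U, hU, hUε⟩
    exacts [.inl h, .inr (.inl h),
      .inr (.inr ⟨U, hU, by rw [hUε, add_tsub_cancel_of_le (hSep hU).le]⟩)]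
  obtain ⟨f, rfl⟩ : ∃ f', f = f' + Pi.single x ε :=
    ⟨f - Pi.single x ε, by ext z; by_cases hz : z = x <;> simp [hz, hεf]⟩
  obtain ⟨g, rfl⟩ : ∃ g', g = g' + Pi.single y ε :=
    ⟨g - Pi.single y ε, by ext z; by_cases hz : z = y <;> simp [hz, hεg]⟩
  have hsep (U : Finset E) (hU : IsUpperSet (U : Set E)) (hxU : x ∉ U) (hyU : y ∈ U) :
      ∑ z ∈ U, f z ≤ ∑ z ∈ U, g z := by
    have := hεU U (by simp [Sep, hU, hxU, hyU])
    rw [sum_add_single, sum_add_single, if_neg hxU, if_pos hyU, add_zero] at this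
    exact le_of_add_le_add_right this
  have hcases : f x = 0 ∨ g y = 0 ∨ ∃ U : Finset E, IsUpperSet (U : Set E) ∧ x ∉ U ∧ y ∈ U ∧
      ∑ z ∈ U, f z = ∑ z ∈ U, g z := by
    rcases hεcases with hεx | hεy | ⟨U, hU, hUeq⟩
    · exact .inl (by simpa using hεx)
    · exact .inr (.inl (by simpa using hεy))
    · simp only [Sep, mem_filter, mem_univ, true_and] at hU
      simp only [sum_add_single, hU.2.1, hU.2.2, if_true, if_false, add_zero, add_left_inj] at hUeq
      exact .inr (.inr ⟨U, hU.1, hU.2.1, hU.2.2, hUeq⟩)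
  simp only [sum_add_single, mem_univ, if_true, add_left_inj] at htot
  exact ⟨x, y, ε, f, g, hxy, rfl, rfl, htot, sum_le_sum_of_add_single hxy hdom hsep,
    transportPotential_lt_add_single hxy hε hcases⟩

theorem exists_transportPlan [Fintype E] (f g : E → ℝ≥0) (htot : ∑ z, f z = ∑ z, g z)
    (hdom : ∀ U : Finset E, IsUpperSet (U : Set E) → ∑ z ∈ U, f z ≤ ∑ z ∈ U, g z) :
    ∃ h : E → E → ℝ≥0, (∀ x y, h x y ≠ 0 → x ≤ y) ∧ (∀ x, ∑ y, h x y = f x) ∧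
      ∀ y, ∑ x, h x y = g y := by
  classical
  induction hn : transportPotential f g using Nat.strong_induction_on generalizing f g with
  | _ n ih =>
  subst hn
  by_cases hf : f = 0
  · have hg : g = 0 :=
      funext (by simpa [hf, eq_comm (a := (0 : ℝ≥0)), sum_eq_zero_iff] using htot)
    exact ⟨0, by simp, by simp [hf], by simp [hg]⟩
  obtain ⟨x, y, ε, f', g', hxy, rfl, rfl, htot', hdom', hlt⟩ := exists_transfer_step htot hdom hf
  obtain ⟨h, hh, hrow, hcol⟩ := ih _ hlt f' g' htot' hdom' rfl
  refine ⟨fun a b ↦ h a b + if a = x ∧ b = y then ε else 0, fun a b hab ↦ ?_, fun a ↦ ?_,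
    fun b ↦ ?_⟩
  · by_cases hb : a = x ∧ b = y
    · exact hb.1 ▸ hb.2 ▸ hxy
    · exact hh a b (by simpa [hb] using hab)
  · simp [sum_add_distrib, hrow, ite_and, Pi.single_apply]
  · simp [sum_add_distrib, hcol, ite_and, Pi.single_apply, and_comm]

end Transport

theorem stochDom_of_forall_isUpperSet {E : Type*} [Fintype E] [Preorder E] [MeasurableSpace E]
    [MeasurableSingletonClass E] (μ ν : Measure E) [IsProbabilityMeasure μ]
    [IsProbabilityMeasure ν] (hμν : ∀ U : Set E, IsUpperSet U → μ U ≤ ν U) : StochDom μ ν := by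
  classical
  have hmass (m : Measure E) [IsFiniteMeasure m] (U : Finset E) :
      ∑ x ∈ U, ((m {x}).toNNReal : ℝ≥0∞) = m U := by
    simp [ENNReal.coe_toNNReal, sum_measure_singleton]
  have htot : ∑ x, ((μ {x}).toNNReal : ℝ≥0∞) = ∑ x, ((ν {x}).toNNReal : ℝ≥0∞) := by
    simp only [hmass, coe_univ, measure_univ]
  obtain ⟨h, hh, hrow, hcol⟩ := exists_transportPlan (fun x ↦ (μ {x}).toNNReal)
    (fun x ↦ (ν {x}).toNNReal) (by exact_mod_cast htot) fun U hU ↦ by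
      exact_mod_cast (hmass μ U).trans_le ((hμν U hU).trans (hmass ν U).ge)
  set κ : Measure (E × E) := ∑ x, ∑ y, (h x y : ℝ≥0∞) • Measure.dirac (x, y)
  have hκ (s : Set (E × E)) : κ s = ∑ x, ∑ y, (h x y : ℝ≥0∞) * s.indicator 1 (x, y) := by
    simp only [κ, Measure.coe_finsetSum, Finset.sum_apply, Measure.smul_apply,
      Measure.dirac_apply, smul_eq_mul]
  have hfst : κ.map Prod.fst = μ := by
    refine Measure.ext_iff_singleton.2 fun a ↦ ?_
    rw [Measure.map_apply measurable_fst (measurableSet_singleton a), hκ]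
    simp [Set.indicator_apply, ← ENNReal.ofNNReal_finsetSum, hrow]
  have hsnd : κ.map Prod.snd = ν := by
    refine Measure.ext_iff_singleton.2 fun b ↦ ?_
    rw [Measure.map_apply measurable_snd (measurableSet_singleton b), hκ]
    simp [Set.indicator_apply, ← ENNReal.ofNNReal_finsetSum, hcol]
  have : IsProbabilityMeasure κ := by
    rw [← Measure.isProbabilityMeasure_map_iff measurable_fst.aemeasurable, hfst]
    infer_instance
  refine ⟨κ, this, hfst, hsnd, (prob_compl_eq_zero_iff (Set.toFinite _).measurableSet).1 ?_⟩
  rw [hκ]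
  refine sum_eq_zero fun x _ ↦ sum_eq_zero fun y _ ↦ ?_
  by_cases hxy : x ≤ y
  · simp [hxy]
  · simp [not_imp_comm.1 (hh x y) hxy]

lemma isProbabilityMeasure_bern {p : ℝ≥0∞} (hp : p ≤ 1) : IsProbabilityMeasure (bern p) :=
  ⟨by simp [bern, add_tsub_cancel_of_le hp]⟩

lemma bern_apply (p : ℝ≥0∞) (T : Set Bool) :
    bern p T = T.indicator (fun _ ↦ p) true + T.indicator (fun _ ↦ 1 - p) false := by
  by_cases ht : true ∈ T <;> by_cases hf : false ∈ T <;> simp [bern, ht, hf]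

lemma pi_bern_setOf_eq_true {ι : Type*} [Fintype ι] {p : ℝ≥0∞} (hp : p ≤ 1) (i : ι) :
    Measure.pi (fun _ : ι ↦ bern p) {w | w i = true} = p := by
  have := isProbabilityMeasure_bern hp
  change Measure.pi _ ((Function.eval i : (ι → Bool) → Bool) ⁻¹' {true}) = p
  rw [(measurePreserving_eval (fun _ : ι ↦ bern p) i).measure_preimage
    (measurableSet_singleton true).nullMeasurableSet, bern_apply]
  simp

theorem MeasureTheory.Measure.pi_eq_lintegral_piecewise {ι : Type*} [Fintype ι] [DecidableEq ι]
    {α : ι → Type*} [∀ i, MeasurableSpace (α i)] (μ : ∀ i, Measure (α i))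
    [∀ i, IsProbabilityMeasure (μ i)] (s : Finset ι) {S : Set (∀ i, α i)}
    (hS : MeasurableSet S) :
    Measure.pi μ S = ∫⁻ z, Measure.pi μ {w | s.piecewise w z ∈ S} ∂Measure.pi μ := by
  set G : (∀ i, α i) × (∀ i, α i) → ∀ i, α i := fun q ↦ s.piecewise q.2 q.1
  have hG : Measurable G := by
    refine measurable_pi_lambda _ fun i ↦ ?_
    by_cases hi : i ∈ s <;>
      simp only [G, Finset.piecewise_eq_of_mem, Finset.piecewise_eq_of_notMem, hi,
        not_false_eq_true] <;> fun_prop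
  have hmap : ((Measure.pi μ).prod (Measure.pi μ)).map G = Measure.pi μ := by
    refine (Measure.pi_eq fun t ht ↦ ?_).symm
    have hpre : G ⁻¹' Set.univ.pi t = Set.univ.pi (s.piecewise (fun _ ↦ Set.univ) t) ×ˢ
        Set.univ.pi (s.piecewise t fun _ ↦ Set.univ) := by
      ext q
      simp only [G, Set.mem_preimage, Set.mem_univ_pi, Set.mem_prod, ← forall_and]
      exact forall_congr' fun i ↦ by by_cases hi : i ∈ s <;> simp [hi]
    rw [Measure.map_apply hG (.univ_pi ht), hpre, Measure.prod_prod, Measure.pi_pi,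
      Measure.pi_pi, ← Finset.prod_mul_distrib]
    refine Finset.prod_congr rfl fun i _ ↦ ?_
    by_cases hi : i ∈ s <;> simp [hi]
  conv_lhs => rw [← hmap, Measure.map_apply hG hS, Measure.prod_apply (hG hS)]
  rfl

theorem MeasureTheory.Measure.pi_eq_lintegral_update {ι : Type*} [Fintype ι] [DecidableEq ι]
    {α : ι → Type*} [∀ i, MeasurableSpace (α i)] (μ : ∀ i, Measure (α i))
    [∀ i, IsProbabilityMeasure (μ i)] (i : ι) {S : Set (∀ i, α i)} (hS : MeasurableSet S) :
    Measure.pi μ S = ∫⁻ z, μ i {t | Function.update z i t ∈ S} ∂Measure.pi μ := by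
  rw [Measure.pi_eq_lintegral_piecewise μ {i} hS]
  refine lintegral_congr fun z ↦ ?_
  simp only [Finset.piecewise_singleton]
  exact (measurePreserving_eval μ i).measure_preimage
    (hS.preimage (measurable_update z)).nullMeasurableSet

def switchOne {ι : Type*} [DecidableEq ι] (s : Finset ι) (V : Set (ι → Bool)) :
    Set (ι → Bool) :=
  {z | ∃ i ∈ s, Function.update z i true ∈ V}

lemma IsUpperSet.switchOne {ι : Type*} [DecidableEq ι] {V : Set (ι → Bool)} (hV : IsUpperSet V)
    (s : Finset ι) : IsUpperSet (switchOne s V) := by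
  rintro z z' hzz' ⟨i, hi, hiV⟩
  exact ⟨i, hi, hV (update_le_update_iff.2 ⟨le_rfl, fun j _ ↦ hzz' j⟩) hiV⟩

lemma indicator_switchOne_add_indicator_le_pi_bern {ι : Type*} [Fintype ι] [DecidableEq ι]
    {p : ℝ≥0∞} (hp : p ≤ 1) {V : Set (ι → Bool)} (hV : IsUpperSet V) (s : Finset ι)
    {z : ι → Bool} (hz : ∀ i ∈ s, z i = false) :
    (switchOne s V).indicator (fun _ ↦ p) z + V.indicator (fun _ ↦ 1 - p) z ≤
      Measure.pi (fun _ : ι ↦ bern p) {w | s.piecewise w z ∈ V} := by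
  have := isProbabilityMeasure_bern hp
  have hz_le (w : ι → Bool) : z ≤ s.piecewise w z := fun i ↦ by
    by_cases hi : i ∈ s <;> simp [hi, hz]
  by_cases hzV : z ∈ V
  · have huniv : {w | s.piecewise w z ∈ V} = Set.univ :=
      Set.eq_univ_of_forall fun w ↦ hV (hz_le w) hzV
    calc (switchOne s V).indicator (fun _ ↦ p) z + V.indicator (fun _ ↦ 1 - p) z
        ≤ p + (1 - p) :=
          add_le_add (Set.indicator_apply_le fun _ ↦ le_rfl) (Set.indicator_apply_le fun _ ↦ le_rfl)
      _ = _ := by rw [huniv, measure_univ, add_tsub_cancel_of_le hp]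
  rw [Set.indicator_of_notMem hzV, add_zero]
  by_cases hz1 : z ∈ switchOne s V
  · rw [Set.indicator_of_mem hz1]
    obtain ⟨i, hi, hiV⟩ := hz1
    refine (pi_bern_setOf_eq_true hp i).symm.trans_le
      (measure_mono fun w hw ↦ hV (fun j ↦ ?_) hiV)
    by_cases hj : j = i
    · subst hj; simp [hi, show w j = true from hw]
    · simpa [hj] using hz_le w j
  · simp [hz1]

lemma Finset.piecewise_insert_update {ι β : Type*} [DecidableEq ι] {C : Finset ι} {i : ι}
    (hi : i ∉ C) (x g : ι → β) (t : β) :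
    (insert i C).piecewise (Function.update x i t) g = Function.update (C.piecewise x g) i t := by
  ext j
  by_cases hj : j = i
  · subst hj; simp
  · simp [Finset.piecewise, hj]

def fiberLift {A B : Type*} [DecidableEq A] (π : A → B) (x : B → Bool) (s : B → A) :
    A → Bool :=
  fun a ↦ x (π a) && decide (s (π a) = a)

def liftSet {A B : Type*} [DecidableEq A] (π : A → B) (U : Set (A → Bool)) : Set (B → Bool) :=
  {x | ∃ s : B → A, (∀ b, π (s b) = b) ∧ fiberLift π x s ∈ U}

lemma fiberLift_update_true {A B : Type*} [DecidableEq A] [DecidableEq B] {π : A → B}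
    {x : B → Bool} {s : B → A} (hs : ∀ b, π (s b) = b) {b : B} (hx : x b = false) :
    fiberLift π (Function.update x b true) s = Function.update (fiberLift π x s) (s b) true := by
  ext a
  by_cases ha : a = s b
  · subst ha; simp [fiberLift, hs]
  · by_cases hab : π a = b
    · subst hab; simp [fiberLift, ha, hx, Ne.symm ha]
    · simp [fiberLift, ha, hab]

lemma bern_update_mem_liftSet_le {A B : Type*} [Fintype A] [DecidableEq A] [DecidableEq B]
    {π : A → B} {p : ℝ≥0∞} {U : Set (A → Bool)} {C : Finset B} {b : B} (hb : b ∉ C)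
    (x : B → Bool) :
    bern p {t | (insert b C).piecewise (Function.update x b t) ⊥ ∈ liftSet π U} ≤
      {x | C.piecewise x ⊥ ∈ liftSet π (switchOne {a | π a = b} U)}.indicator (fun _ ↦ p) x +
        {x | C.piecewise x ⊥ ∈ liftSet π U}.indicator (fun _ ↦ 1 - p) x := by
  set T := {t | (insert b C).piecewise (Function.update x b t) ⊥ ∈ liftSet π U}
  have hxb : C.piecewise x ⊥ b = false := by simp [hb]
  have htrue : true ∈ T →
      x ∈ {x | C.piecewise x ⊥ ∈ liftSet π (switchOne {a | π a = b} U)} := by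
    rintro ⟨s, hs, hU⟩
    rw [Finset.piecewise_insert_update hb, fiberLift_update_true hs hxb] at hU
    exact ⟨s, hs, s b, by simp [hs], hU⟩
  have hfalse : false ∈ T → x ∈ {x | C.piecewise x ⊥ ∈ liftSet π U} := by
    rintro ⟨s, hs, hU⟩
    rw [Finset.piecewise_insert_update hb, Function.update_eq_self_iff.2 hxb.symm] at hU
    exact ⟨s, hs, hU⟩
  rw [bern_apply]
  refine add_le_add ?_ ?_
  · by_cases h : true ∈ T
    · simp [Set.indicator_of_mem h, Set.indicator_of_mem (htrue h)]
    · simp [Set.indicator_of_notMem h]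
  · by_cases h : false ∈ T
    · simp [Set.indicator_of_mem h, Set.indicator_of_mem (hfalse h)]
    · simp [Set.indicator_of_notMem h]

lemma pi_bern_piecewise_insert_mem_liftSet_le {A B : Type*} [Fintype A] [DecidableEq A]
    [Fintype B] [DecidableEq B] {π : A → B} {p : ℝ≥0∞} (hp : p ≤ 1) {U : Set (A → Bool)}
    {C : Finset B} {b : B} (hb : b ∉ C) :
    Measure.pi (fun _ : B ↦ bern p) {x | (insert b C).piecewise x ⊥ ∈ liftSet π U} ≤
      p * Measure.pi (fun _ : B ↦ bern p)
          {x | C.piecewise x ⊥ ∈ liftSet π (switchOne {a | π a = b} U)} +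
        (1 - p) * Measure.pi (fun _ : B ↦ bern p) {x | C.piecewise x ⊥ ∈ liftSet π U} := by
  have := isProbabilityMeasure_bern hp
  rw [Measure.pi_eq_lintegral_update _ b (Set.toFinite _).measurableSet,
    ← lintegral_indicator_const (Set.toFinite _).measurableSet,
    ← lintegral_indicator_const (Set.toFinite _).measurableSet,
    ← lintegral_add_left (measurable_const.indicator (Set.toFinite _).measurableSet)]
  exact lintegral_mono fun x ↦ bern_update_mem_liftSet_le hb x

lemma add_le_pi_bern_piecewise_union {ι : Type*} [Fintype ι] [DecidableEq ι] {p : ℝ≥0∞}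
    (hp : p ≤ 1) {V : Set (ι → Bool)} (hV : IsUpperSet V) {s t : Finset ι} (hst : Disjoint s t) :
    p * Measure.pi (fun _ : ι ↦ bern p) {z | t.piecewise z ⊥ ∈ switchOne s V} +
        (1 - p) * Measure.pi (fun _ : ι ↦ bern p) {z | t.piecewise z ⊥ ∈ V} ≤
      Measure.pi (fun _ : ι ↦ bern p) {z | (s ∪ t).piecewise z ⊥ ∈ V} := by
  have := isProbabilityMeasure_bern hp
  have hpiecewise (z w : ι → Bool) :
      (s ∪ t).piecewise (s.piecewise w z) ⊥ = s.piecewise w (t.piecewise z ⊥) := by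
    ext i
    by_cases hi : i ∈ s <;> simp [Finset.piecewise, hi]
  calc p * Measure.pi (fun _ : ι ↦ bern p) {z | t.piecewise z ⊥ ∈ switchOne s V} +
        (1 - p) * Measure.pi (fun _ : ι ↦ bern p) {z | t.piecewise z ⊥ ∈ V}
      = ∫⁻ z, ({z | t.piecewise z ⊥ ∈ switchOne s V}.indicator (fun _ ↦ p) z +
          {z | t.piecewise z ⊥ ∈ V}.indicator (fun _ ↦ 1 - p) z)
          ∂Measure.pi (fun _ : ι ↦ bern p) := by
        rw [lintegral_add_left (measurable_const.indicator (Set.toFinite _).measurableSet),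
          lintegral_indicator_const (Set.toFinite _).measurableSet,
          lintegral_indicator_const (Set.toFinite _).measurableSet]
    _ ≤ ∫⁻ z, Measure.pi (fun _ : ι ↦ bern p) {w | s.piecewise w (t.piecewise z ⊥) ∈ V}
          ∂Measure.pi (fun _ : ι ↦ bern p) :=
        lintegral_mono fun z ↦ indicator_switchOne_add_indicator_le_pi_bern hp hV s
          fun i hi ↦ by simp [Finset.disjoint_left.1 hst hi]
    _ = _ := by
        rw [Measure.pi_eq_lintegral_piecewise _ s (S := {z | (s ∪ t).piecewise z ⊥ ∈ V})
          (Set.toFinite _).measurableSet]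
        simp only [Set.mem_ofPred_eq, hpiecewise]

-- Induction over the set `C` of active columns; `C.piecewise x ⊥` switches the others off.
theorem pi_bern_piecewise_liftSet_le {A B : Type*} [Fintype A] [DecidableEq A] [Fintype B]
    [DecidableEq B] {π : A → B} {p : ℝ≥0∞} (hp : p ≤ 1)
    (C : Finset B) {U : Set (A → Bool)} (hU : IsUpperSet U) :
    Measure.pi (fun _ : B ↦ bern p) {x | C.piecewise x ⊥ ∈ liftSet π U} ≤
      Measure.pi (fun _ : A ↦ bern p) {z | ({a | π a ∈ C} : Finset A).piecewise z ⊥ ∈ U} := by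
  have := isProbabilityMeasure_bern hp
  induction C using Finset.induction_on generalizing U with
  | empty =>
    by_cases h0 : (⊥ : A → Bool) ∈ U
    · have huniv : {z | ({a | π a ∈ (∅ : Finset B)} : Finset A).piecewise z ⊥ ∈ U} = Set.univ :=
        Set.eq_univ_of_forall fun z ↦ by
          change _ ∈ U
          convert h0 using 1
          ext a
          simp
      rw [huniv, measure_univ]
      exact prob_le_one
    · have hlift (s : B → A) : fiberLift π ⊥ s = ⊥ := rfl
      simp [liftSet, hlift, h0]
  | insert b C hb ih =>
    have hfilter : ({a | π a ∈ insert b C} : Finset A) =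
        ({a | π a = b} : Finset A) ∪ ({a | π a ∈ C} : Finset A) := by
      ext a
      simp
    rw [hfilter]
    calc _ ≤ _ := pi_bern_piecewise_insert_mem_liftSet_le hp hb
      _ ≤ _ := by
        gcongr
        exacts [ih (hU.switchOne _), ih hU]
      _ ≤ _ := add_le_pi_bern_piecewise_union hp hU
        (Finset.disjoint_filter.2 fun a _ hab ↦ by rwa [hab])

theorem pi_bern_liftSet_le {A B : Type*} [Fintype A] [DecidableEq A] [Fintype B] [DecidableEq B]
    {π : A → B} {p : ℝ≥0∞} (hp : p ≤ 1) {U : Set (A → Bool)} (hU : IsUpperSet U) :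
    Measure.pi (fun _ : B ↦ bern p) (liftSet π U) ≤ Measure.pi (fun _ : A ↦ bern p) U := by
  have h := pi_bern_piecewise_liftSet_le (π := π) hp Finset.univ hU
  rw [Finset.filter_true_of_mem fun a _ ↦ Finset.mem_univ (π a)] at h
  simpa only [Finset.piecewise_univ, Set.ofPred_mem_eq] using h

theorem stmt0_general {A B : Type*} [Fintype A] [DecidableEq A] [Fintype B]
    [MeasurableSpace A] [DiscreteMeasurableSpace A]
    (π : A → B)
    (p : ENNReal) (hp : p ≤ 1)
    {Ω : Type*} [MeasurableSpace Ω] (P : Measure Ω) [IsProbabilityMeasure P]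
    (X : B → Ω → Bool) (S : B → Ω → A)
    (hXmeas : ∀ b, Measurable (X b)) (hSmeas : ∀ b, Measurable (S b))
    (hlaw : P.map (fun ω b => X b ω) = Measure.pi (fun _ : B => bern p))
    (hS : ∀ b ω, π (S b ω) = b) :
    StochDom
      (P.map (fun ω a => X (π a) ω && decide (S (π a) ω = a)))
      (Measure.pi (fun _ : A => bern p)) := by
  classical
  have := isProbabilityMeasure_bern hp
  have hX : Measurable fun ω b ↦ X b ω := measurable_pi_lambda _ hXmeas
  have hY : Measurable fun ω a ↦ X (π a) ω && decide (S (π a) ω = a) :=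
    measurable_pi_lambda _ fun a ↦ (Measurable.of_discrete (f := fun q : Bool × A ↦
      q.1 && decide (q.2 = a))).comp ((hXmeas _).prodMk (hSmeas _))
  have := Measure.isProbabilityMeasure_map (μ := P) hY.aemeasurable
  refine stochDom_of_forall_isUpperSet _ _ fun U hU ↦ ?_
  calc P.map _ U = P ((fun ω a ↦ X (π a) ω && decide (S (π a) ω = a)) ⁻¹' U) :=
        Measure.map_apply hY (Set.toFinite U).measurableSet
    _ ≤ P ((fun ω b ↦ X b ω) ⁻¹' liftSet π U) :=
        measure_mono fun ω hω ↦ ⟨fun b ↦ S b ω, fun b ↦ hS b ω, hω⟩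
    _ = Measure.pi (fun _ : B ↦ bern p) (liftSet π U) := by
        rw [← hlaw, Measure.map_apply hX (Set.toFinite _).measurableSet]
    _ ≤ _ := pi_bern_liftSet_le hp hU

/-- **Theorem (lifting one variable per column).**  If `(X_b)` are i.i.d. Bernoulli(p),
`S b` takes values in `π⁻¹(b)`, and `Y_a = X_{π a} · 1[S (π a) = a]`, then the law of
`Y` is stochastically dominated by `Bernoulli(p)^{⊗A}`. -/
theorem stmt0 {A B : Type*} [Fintype A] [Nonempty A] [DecidableEq A] [Fintype B] [Nonempty B]
    [MeasurableSpace A] [DiscreteMeasurableSpace A]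
    (π : A → B) (hπ : Function.Surjective π)
    (p : ENNReal) (hp : p ≤ 1)
    {Ω : Type*} [MeasurableSpace Ω] (P : Measure Ω) [IsProbabilityMeasure P]
    (X : B → Ω → Bool) (S : B → Ω → A)
    (hXmeas : ∀ b, Measurable (X b)) (hSmeas : ∀ b, Measurable (S b))
    (hlaw : P.map (fun ω b => X b ω) = Measure.pi (fun _ : B => bern p))
    (hS : ∀ b ω, π (S b ω) = b) :
    StochDom
      (P.map (fun ω a => X (π a) ω && decide (S (π a) ω = a)))
      (Measure.pi (fun _ : A => bern p)) :=
  stmt0_general π p hp P X S hXmeas hSmeas hlaw hS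
end

section
/- Let h₁ : E₁ → E₁' and h₂ : E₂ → E₂' be functions between countable sets, let ν₁ and ν₂ be probability measures on E₁ and E₂ respectively, and let η be a coupling between the pushforward measures ν₁ ∘ h₁⁻¹ and ν₂ ∘ h₂⁻¹. Then there exists a coupling ν of ν₁ and ν₂ whose pushforward by the map (x₁,x₂) ↦ (h₁(x₁), h₂(x₂)) equals η. -/
/-!
Condition `ν₁` on the fibres of `h₁` and `ν₂` on the fibres of `h₂`. The kernels
`y ↦ νᵢ[|hᵢ ⁻¹' {y}]` composed with `νᵢ.map hᵢ` give back `νᵢ`, and for almost every `y` they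
send `y` to a probability measure carried by the fibre over `y`. Drawing `(y₁, y₂) ∼ η` and then
`x₁`, `x₂` independently from the two conditional laws therefore gives a coupling of `ν₁` and
`ν₂` whose image under `(h₁, h₂)` is `η`.
-/

open MeasureTheory ProbabilityTheory

/-- `κ` is a coupling of `μ` and `ν`. -/
def IsCoupling {E₁ E₂ : Type*} [MeasurableSpace E₁] [MeasurableSpace E₂]
    (κ : Measure (E₁ × E₂)) (μ : Measure E₁) (ν : Measure E₂) : Prop :=
  IsProbabilityMeasure κ ∧ κ.map Prod.fst = μ ∧ κ.map Prod.snd = ν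

lemma MeasureTheory.Measure.comp_map_eq_comap_comp {α β γ : Type*} [MeasurableSpace α]
    [MeasurableSpace β] [MeasurableSpace γ] (κ : Kernel β γ) (μ : Measure α) {f : α → β}
    (hf : Measurable f) : κ ∘ₘ μ.map f = κ.comap f hf ∘ₘ μ := by
  rw [← Measure.deterministic_comp_eq_map hf, Measure.comp_assoc,
    Kernel.comp_deterministic_eq_comap]

namespace IsCoupling

variable {α₁ α₂ β₁ β₂ : Type*} [MeasurableSpace α₁] [MeasurableSpace α₂]
  [MeasurableSpace β₁] [MeasurableSpace β₂] {η : Measure (β₁ × β₂)}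
  {ρ₁ : Measure β₁} {ρ₂ : Measure β₂}
  {κ₁ : Kernel β₁ α₁} {κ₂ : Kernel β₂ α₂} [IsSFiniteKernel κ₁] [IsSFiniteKernel κ₂]

lemma parallelComp_comp (hη : IsCoupling η ρ₁ ρ₂)
    (hκ₁ : ∀ᵐ y ∂ρ₁, IsProbabilityMeasure (κ₁ y))
    (hκ₂ : ∀ᵐ y ∂ρ₂, IsProbabilityMeasure (κ₂ y)) :
    IsCoupling ((κ₁ ∥ₖ κ₂) ∘ₘ η) (κ₁ ∘ₘ ρ₁) (κ₂ ∘ₘ ρ₂) := by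
  obtain ⟨hη_prob, rfl, rfl⟩ := hη
  have hκ₁' := ae_of_ae_map measurable_fst.aemeasurable hκ₁
  have hκ₂' := ae_of_ae_map measurable_snd.aemeasurable hκ₂
  refine ⟨⟨?_⟩, ?_, ?_⟩
  · rw [Measure.bind_apply .univ (Kernel.aemeasurable _), ← measure_univ (μ := η),
      ← lintegral_one]
    refine lintegral_congr_ae ?_
    filter_upwards [hκ₁', hκ₂'] with y hy₁ hy₂
    simp
  · rw [Measure.map_comp _ _ measurable_fst, Measure.comp_map_eq_comap_comp _ _ measurable_fst]
    refine Measure.comp_congr ?_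
    filter_upwards [hκ₂'] with y hy
    rw [Kernel.map_apply _ measurable_fst, Kernel.parallelComp_apply, Measure.map_fst_prod,
      measure_univ, one_smul, Kernel.comap_apply]
  · rw [Measure.map_comp _ _ measurable_snd, Measure.comp_map_eq_comap_comp _ _ measurable_snd]
    refine Measure.comp_congr ?_
    filter_upwards [hκ₁'] with y hy
    rw [Kernel.map_apply _ measurable_snd, Kernel.parallelComp_apply, Measure.map_snd_prod,
      measure_univ, one_smul, Kernel.comap_apply]

lemma map_prodMap_parallelComp_comp (hη : IsCoupling η ρ₁ ρ₂) {f₁ : α₁ → β₁} {f₂ : α₂ → β₂}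
    (hf₁ : Measurable f₁) (hf₂ : Measurable f₂) (hκ₁ : ∀ᵐ y ∂ρ₁, (κ₁ y).map f₁ = .dirac y)
    (hκ₂ : ∀ᵐ y ∂ρ₂, (κ₂ y).map f₂ = .dirac y) :
    ((κ₁ ∥ₖ κ₂) ∘ₘ η).map (Prod.map f₁ f₂) = η := by
  obtain ⟨-, rfl, rfl⟩ := hη
  rw [Measure.map_comp _ _ (hf₁.prodMap hf₂)]
  conv_rhs => rw [← Measure.id_comp (μ := η)]
  refine Measure.comp_congr ?_
  filter_upwards [ae_of_ae_map measurable_fst.aemeasurable hκ₁,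
    ae_of_ae_map measurable_snd.aemeasurable hκ₂] with y hy₁ hy₂
  rw [Kernel.map_apply _ (hf₁.prodMap hf₂), Kernel.parallelComp_apply,
    ← Measure.map_prod_map _ _ hf₁ hf₂, hy₁, hy₂, Measure.dirac_prod_dirac, Kernel.id_apply]

end IsCoupling

/-- On a `μ`-null fibre this is the zero measure, not a probability measure. -/
noncomputable def fiberCond {E E' : Type*} [MeasurableSpace E] [Countable E'] [MeasurableSpace E']
    [MeasurableSingletonClass E'] (μ : Measure E) (h : E → E') : Kernel E' E :=
  Kernel.ofFunOfCountable fun y => μ[|h ⁻¹' {y}]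

section FiberCond

variable {E E' : Type*} [MeasurableSpace E] [Countable E'] [MeasurableSpace E']
  [MeasurableSingletonClass E'] (μ : Measure E) {h : E → E'}

@[simp]
lemma fiberCond_apply (y : E') : fiberCond μ h y = μ[|h ⁻¹' {y}] := rfl

instance (h : E → E') : IsFiniteKernel (fiberCond μ h) :=
  ⟨⟨1, ENNReal.one_lt_top, fun y => prob_le_one (μ := μ[|h ⁻¹' {y}])⟩⟩

lemma fiberCond_comp_map [IsFiniteMeasure μ] (hh : Measurable h) :
    fiberCond μ h ∘ₘ μ.map h = μ := by
  ext s hs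
  have hfiber (y : E') : μ.map h {y} * fiberCond μ h y s = μ (h ⁻¹' {y} ∩ s) := by
    rw [Measure.map_apply hh (.singleton _), mul_comm]
    exact cond_mul_eq_inter (hh (.singleton y)) s μ
  rw [Measure.comp_eq_sum_of_countable, Measure.sum_apply _ hs]
  simp only [Measure.smul_apply, smul_eq_mul, hfiber]
  rw [← measure_iUnion (fun y y' hyy' => ?_) fun y => (hh (.singleton y)).inter hs]
  · congr 1; ext x; simp
  · exact ((Set.pairwiseDisjoint_fiber h Set.univ) trivial trivial hyy').mono
      Set.inter_subset_left Set.inter_subset_left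

lemma ae_isProbabilityMeasure_fiberCond [IsFiniteMeasure μ] (hh : Measurable h) :
    ∀ᵐ y ∂μ.map h, IsProbabilityMeasure (fiberCond μ h y) := by
  rw [ae_iff_of_countable]
  intro y hy
  rw [Measure.map_apply hh (.singleton _)] at hy
  exact cond_isProbabilityMeasure hy

lemma ae_map_fiberCond [IsFiniteMeasure μ] (hh : Measurable h) :
    ∀ᵐ y ∂μ.map h, (fiberCond μ h y).map h = .dirac y := by
  rw [ae_iff_of_countable]
  intro y hy
  rw [Measure.map_apply hh (.singleton _)] at hy
  refine Measure.ext_of_singleton fun z => ?_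
  rw [Measure.map_apply hh (.singleton z), Measure.dirac_apply, fiberCond_apply]
  obtain rfl | hzy := eq_or_ne z y
  · simp [cond_apply_self hy (measure_ne_top μ _)]
  · simp [cond_apply (hh (.singleton y)), ← Set.preimage_inter, hzy.symm]

end FiberCond

theorem stmt2_general {E₁ E₂ E₁' E₂' : Type*} [Countable E₁'] [Countable E₂']
    [MeasurableSpace E₁] [DiscreteMeasurableSpace E₁]
    [MeasurableSpace E₂] [DiscreteMeasurableSpace E₂]
    [MeasurableSpace E₁'] [DiscreteMeasurableSpace E₁']
    [MeasurableSpace E₂'] [DiscreteMeasurableSpace E₂']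
    (h₁ : E₁ → E₁') (h₂ : E₂ → E₂')
    (ν₁ : Measure E₁) (ν₂ : Measure E₂)
    [IsProbabilityMeasure ν₁] [IsProbabilityMeasure ν₂]
    (η : Measure (E₁' × E₂'))
    (hη : IsCoupling η (ν₁.map h₁) (ν₂.map h₂)) :
    ∃ ν : Measure (E₁ × E₂), IsCoupling ν ν₁ ν₂ ∧
      ν.map (Prod.map h₁ h₂) = η := by
  have hh₁ : Measurable h₁ := .of_discrete
  have hh₂ : Measurable h₂ := .of_discrete
  refine ⟨(fiberCond ν₁ h₁ ∥ₖ fiberCond ν₂ h₂) ∘ₘ η, ?_,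
    hη.map_prodMap_parallelComp_comp hh₁ hh₂ (ae_map_fiberCond ν₁ hh₁)
      (ae_map_fiberCond ν₂ hh₂)⟩
  simpa only [fiberCond_comp_map _ hh₁, fiberCond_comp_map _ hh₂] using
    hη.parallelComp_comp (ae_isProbabilityMeasure_fiberCond ν₁ hh₁)
      (ae_isProbabilityMeasure_fiberCond ν₂ hh₂)

/-- **Pulling back a coupling.** Any coupling `η` of the pushforward measures
`ν₁ ∘ h₁⁻¹` and `ν₂ ∘ h₂⁻¹` can be obtained as the pushforward by `(h₁, h₂)` of a
coupling of `ν₁` and `ν₂`. -/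
theorem stmt2 {E₁ E₂ E₁' E₂' : Type*} [Countable E₁] [Countable E₂] [Countable E₁'] [Countable E₂']
    [MeasurableSpace E₁] [DiscreteMeasurableSpace E₁]
    [MeasurableSpace E₂] [DiscreteMeasurableSpace E₂]
    [MeasurableSpace E₁'] [DiscreteMeasurableSpace E₁']
    [MeasurableSpace E₂'] [DiscreteMeasurableSpace E₂']
    (h₁ : E₁ → E₁') (h₂ : E₂ → E₂')
    (ν₁ : Measure E₁) (ν₂ : Measure E₂)
    [IsProbabilityMeasure ν₁] [IsProbabilityMeasure ν₂]
    (η : Measure (E₁' × E₂'))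
    (hη : IsCoupling η (ν₁.map h₁) (ν₂.map h₂)) :
    ∃ ν : Measure (E₁ × E₂), IsCoupling ν ν₁ ν₂ ∧
      ν.map (Prod.map h₁ h₂) = η :=
  stmt2_general h₁ h₂ ν₁ ν₂ η hη
end

section
/- Let π : A → B be a surjective map between nonempty finite sets. For each b ∈ B, let ν_b be a probability measure on {0,...,N} and ρ_b a probability measure on {0,...,N}^{π⁻¹(b)} such that for every b and every a ∈ π⁻¹(b), ν_b is stochastically dominated by the a-marginal of ρ_b. Let μ be a π-lift on {0,...,N}^A whose pushdown is stochastically dominated by ⊗_{b∈B} ν_b. Then μ is stochastically dominated by ⊗_{b∈B} ρ_b. -/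
/-!
On a finite poset, `μ` is dominated by `ν` as soon as `μ U ≤ ν U` for every upper set `U`
(Strassen); the coupling comes from a weighted Hall (supply–demand) theorem, proved by
induction on the supports by moving mass along one admissible edge at a time.

Fix an upper set `U` of configurations on `A`. A `π`-lift `x` is recovered from its pushdown by
putting, in every fibre, the pushdown value at the site `ℓ b` of the nonzero coordinate, so
`μ U` is at most the pushdown mass of `⋃ ℓ, W ℓ`, where `W ℓ` is the upper set of configurations on
`B` that land in `U` when placed along `ℓ`. Domination of the pushdown bounds this by
`(⊗ ν_b)(⋃ ℓ, W ℓ)`. The sample of `⊗ ν_b` is then replaced by the values `z b (ℓ b)` of a sample of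
`⊗ ρ_b` one coordinate at a time: with the other coordinates frozen, the relevant section is a
union of upper sets of a chain, hence a single one, attained at one site, where
`ν_b ≼ (ρ_b)_a` applies. Finally, placing `z b (ℓ b)` along `ℓ` stays below the flattening of `z`.
-/

open MeasureTheory ProbabilityTheory

open Finset
open scoped ENNReal NNReal

section TransportPlan

variable {E F M : Type*} [AddCommMonoid M]

def HallCondition [DecidableEq F] [LE M] (t : E → Finset F) (p : E → M) (q : F → M) : Prop :=
  ∀ S : Finset E, ∑ e ∈ S, p e ≤ ∑ f ∈ S.biUnion t, q f

structure IsTransportPlan [Fintype E] [Fintype F] (t : E → Finset F) (p : E → M) (q : F → M)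
    (k : E → F → M) : Prop where
  mem_of_ne_zero : ∀ e f, k e f ≠ 0 → f ∈ t e
  sum_row : ∀ e, ∑ f, k e f = p e
  sum_col : ∀ f, ∑ e, k e f = q f

section Fintype

variable [Fintype E] [Fintype F] {t : E → Finset F}

theorem IsTransportPlan.add {p₁ p₂ : E → M} {q₁ q₂ : F → M} {k₁ k₂ : E → F → M}
    (h₁ : IsTransportPlan t p₁ q₁ k₁) (h₂ : IsTransportPlan t p₂ q₂ k₂) :
    IsTransportPlan t (p₁ + p₂) (q₁ + q₂) (k₁ + k₂) where
  mem_of_ne_zero e f hk := by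
    by_cases h : k₁ e f = 0
    · exact h₂.mem_of_ne_zero e f (by simpa [h] using hk)
    · exact h₁.mem_of_ne_zero e f h
  sum_row e := by simp [sum_add_distrib, h₁.sum_row, h₂.sum_row]
  sum_col f := by simp [sum_add_distrib, h₁.sum_col, h₂.sum_col]

theorem isTransportPlan_single [DecidableEq E] [DecidableEq F] {e₀ : E} {f₀ : F}
    (hf₀ : f₀ ∈ t e₀) (δ : M) :
    IsTransportPlan t (Pi.single e₀ δ) (Pi.single f₀ δ) (Pi.single e₀ (Pi.single f₀ δ)) where
  mem_of_ne_zero e f hk := by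
    obtain rfl : e = e₀ := by by_contra h; simp [h] at hk
    obtain rfl : f = f₀ := by by_contra h; simp [h] at hk
    exact hf₀
  sum_row e := by by_cases h : e = e₀ <;> simp [h]
  sum_col f := by simp [← Finset.sum_apply]

theorem ite_mem_add_ite_mem_compl {X : Type*} [Fintype X] [DecidableEq X] (S : Finset X)
    (g : X → M) :
    (fun x ↦ if x ∈ S then g x else 0) + (fun x ↦ if x ∈ Sᶜ then g x else 0) = g :=
  funext fun x ↦ by by_cases hx : x ∈ S <;> simp [hx]

end Fintype

variable [DecidableEq F] [LinearOrder M]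
  {t : E → Finset F} {p : E → M} {q : F → M}

theorem HallCondition.restrict_compl [Fintype E] [Fintype F] [DecidableEq E]
    [IsOrderedCancelAddMonoid M] (h : HallCondition t p q) {S : Finset E}
    (hS : ∑ f ∈ S.biUnion t, q f = ∑ e ∈ S, p e) :
    HallCondition t (fun e ↦ if e ∈ Sᶜ then p e else 0)
      (fun f ↦ if f ∈ (S.biUnion t)ᶜ then q f else 0) := by
  intro T
  simp only [sum_ite_mem, ← sdiff_eq_inter_compl]
  refine le_of_add_le_add_right (a := ∑ e ∈ S, p e) ?_
  calc ∑ e ∈ T \ S, p e + ∑ e ∈ S, p e = ∑ e ∈ T ∪ S, p e := by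
        rw [← sum_sdiff (subset_union_right : S ⊆ T ∪ S), union_sdiff_right]
    _ ≤ ∑ f ∈ (T ∪ S).biUnion t, q f := h _
    _ = ∑ f ∈ T.biUnion t \ S.biUnion t, q f + ∑ e ∈ S, p e := by
        rw [← hS, union_biUnion, ← sum_sdiff (subset_union_right : _ ⊆ T.biUnion t ∪ _),
          union_sdiff_right]

variable [CanonicallyOrderedAdd M]

theorem HallCondition.restrict [DecidableEq E] (h : HallCondition t p q) (S : Finset E) :
    HallCondition t (fun e ↦ if e ∈ S then p e else 0)
      (fun f ↦ if f ∈ S.biUnion t then q f else 0) := by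
  intro T
  simp only [sum_ite_mem]
  calc ∑ e ∈ T ∩ S, p e ≤ ∑ f ∈ (T ∩ S).biUnion t, q f := h _
    _ ≤ ∑ f ∈ T.biUnion t ∩ S.biUnion t, q f := by
      refine sum_le_sum_of_subset (subset_inter ?_ ?_) <;>
        exact biUnion_subset_biUnion_of_subset_left t (by simp)

theorem single_le_of_le {X : Type*} [DecidableEq X] {g : X → M} {x₀ : X} {δ : M}
    (h : δ ≤ g x₀) : Pi.single x₀ δ ≤ g := by
  intro x
  by_cases hx : x = x₀
  · subst hx; simpa using h
  · simp [hx]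

theorem filter_ne_zero_subset_of_le {X : Type*} [Fintype X] {g g' : X → M} (h : g' ≤ g) :
    univ.filter (g' · ≠ 0) ⊆ univ.filter (g · ≠ 0) := fun x ↦ by
  simpa using fun hx hx' ↦ hx (nonpos_iff_eq_zero.1 (hx' ▸ h x))

theorem card_filter_ne_zero_le_of_le {X : Type*} [Fintype X] {g g' : X → M} (h : g' ≤ g) :
    #{x | g' x ≠ 0} ≤ #{x | g x ≠ 0} :=
  card_le_card (filter_ne_zero_subset_of_le h)

theorem card_filter_ne_zero_lt_of_le {X : Type*} [Fintype X] {g g' : X → M} (h : g' ≤ g)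
    {x₀ : X} (h₀ : g' x₀ = 0) (h₀' : g x₀ ≠ 0) :
    #{x | g' x ≠ 0} < #{x | g x ≠ 0} :=
  card_lt_card <| (ssubset_iff_of_subset (filter_ne_zero_subset_of_le h)).2
    ⟨x₀, by simpa using h₀', by simpa using h₀⟩

variable [IsOrderedCancelAddMonoid M]

theorem HallCondition.exists_isTransportPlan_of_tight [Fintype E] [Fintype F] [DecidableEq E]
    (h : HallCondition t p q) (htot : ∑ e, p e = ∑ f, q f)
    (ih : ∀ (p₁ : E → M) (q₁ : F → M), p₁ ≤ p → q₁ ≤ q → #{e | p₁ e ≠ 0} < #{e | p e ≠ 0} →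
      HallCondition t p₁ q₁ → ∑ e, p₁ e = ∑ f, q₁ f → ∃ k, IsTransportPlan t p₁ q₁ k)
    {S : Finset E} (hS : ∑ f ∈ S.biUnion t, q f = ∑ e ∈ S, p e)
    {e₀ : E} (he₀ : e₀ ∉ S) (hpe₀ : p e₀ ≠ 0) (hSpos : ∑ e ∈ S, p e ≠ 0) :
    ∃ k, IsTransportPlan t p q k := by
  let p₁ e := if e ∈ S then p e else 0
  let p₂ e := if e ∈ Sᶜ then p e else 0
  let q₁ f := if f ∈ S.biUnion t then q f else 0
  let q₂ f := if f ∈ (S.biUnion t)ᶜ then q f else 0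
  have hp : p₁ + p₂ = p := ite_mem_add_ite_mem_compl S p
  have hq : q₁ + q₂ = q := ite_mem_add_ite_mem_compl _ q
  have tot₁ : ∑ e, p₁ e = ∑ f, q₁ f := by simp only [p₁, q₁, sum_ite_mem, univ_inter, hS]
  have tot₂ : ∑ e, p₂ e = ∑ f, q₂ f := by
    refine add_left_cancel (a := ∑ e, p₁ e) ?_
    rw [← sum_add_distrib, tot₁, ← sum_add_distrib]
    exact (congrArg (∑ e, · e) hp).trans (htot.trans (congrArg (∑ f, · f) hq).symm)
  obtain ⟨e₁, he₁, hpe₁⟩ := exists_ne_zero_of_sum_ne_zero hSpos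
  obtain ⟨k₁, hk₁⟩ := ih p₁ q₁ (hp ▸ le_add_right le_rfl) (hq ▸ le_add_right le_rfl)
    (card_filter_ne_zero_lt_of_le (hp ▸ le_add_right le_rfl) (x₀ := e₀) (by simp [p₁, he₀]) hpe₀)
    (h.restrict S) tot₁
  obtain ⟨k₂, hk₂⟩ := ih p₂ q₂ (hp ▸ le_add_left le_rfl) (hq ▸ le_add_left le_rfl)
    (card_filter_ne_zero_lt_of_le (hp ▸ le_add_left le_rfl) (x₀ := e₁) (by simp [p₂, he₁]) hpe₁)
    (h.restrict_compl hS) tot₂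
  exact ⟨k₁ + k₂, hp ▸ hq ▸ hk₁.add hk₂⟩

variable [Sub M] [OrderedSub M]

theorem sum_tsub_single_add {X : Type*} [DecidableEq X]
    {g : X → M} {x₀ : X} {δ : M} (h : δ ≤ g x₀) (T : Finset X) :
    ∑ x ∈ T, (g - Pi.single x₀ δ : X → M) x + (if x₀ ∈ T then δ else 0) = ∑ x ∈ T, g x := by
  rw [← sum_pi_single', ← sum_add_distrib]
  exact sum_congr rfl fun x _ ↦ tsub_add_cancel_of_le (single_le_of_le h x)

theorem HallCondition.tsub_single [DecidableEq E] (h : HallCondition t p q) {e₀ : E} {f₀ : F}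
    (hf₀ : f₀ ∈ t e₀) {δ : M} (hp : δ ≤ p e₀) (hq : δ ≤ q f₀)
    (hδ : ∀ S : Finset E, e₀ ∉ S → f₀ ∈ S.biUnion t →
      ∑ e ∈ S, p e + δ ≤ ∑ f ∈ S.biUnion t, q f) :
    HallCondition t (p - Pi.single e₀ δ) (q - Pi.single f₀ δ) := by
  intro T
  have hp' := sum_tsub_single_add hp T
  refine le_of_add_le_add_right (a := if f₀ ∈ T.biUnion t then δ else 0) ?_
  rw [sum_tsub_single_add hq]
  by_cases he : e₀ ∈ T
  · rw [if_pos he] at hp'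
    rw [if_pos (mem_biUnion.2 ⟨e₀, he, hf₀⟩), hp']
    exact h T
  · rw [if_neg he, add_zero] at hp'
    rw [hp']
    split_ifs with hf
    · exact hδ T he hf
    · rw [add_zero]; exact h T

theorem sum_tsub_single_eq_sum_tsub_single [Fintype E] [Fintype F] [DecidableEq E] {e₀ : E}
    {f₀ : F} {δ : M} (hp : δ ≤ p e₀) (hq : δ ≤ q f₀) (htot : ∑ e, p e = ∑ f, q f) :
    ∑ e, (p - Pi.single e₀ δ : E → M) e = ∑ f, (q - Pi.single f₀ δ : F → M) f := by
  have hp' := sum_tsub_single_add hp univ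
  have hq' := sum_tsub_single_add hq univ
  rw [if_pos (mem_univ _)] at hp' hq'
  exact add_right_cancel (hp'.trans (htot.trans hq'.symm))

theorem HallCondition.exists_maximal_transfer [Fintype E] [DecidableEq E]
    (h : HallCondition t p q) (e₀ : E) (f₀ : F) :
    ∃ δ, δ ≤ p e₀ ∧ δ ≤ q f₀ ∧
      (∀ S : Finset E, e₀ ∉ S → f₀ ∈ S.biUnion t →
        ∑ e ∈ S, p e + δ ≤ ∑ f ∈ S.biUnion t, q f) ∧
      (δ = p e₀ ∨ δ = q f₀ ∨ ∃ S : Finset E, e₀ ∉ S ∧ f₀ ∈ S.biUnion t ∧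
        ∑ e ∈ S, p e + δ = ∑ f ∈ S.biUnion t, q f) := by
  let slack (S : Finset E) : M := ∑ f ∈ S.biUnion t, q f - ∑ e ∈ S, p e
  let C := insert (min (p e₀) (q f₀))
    ((univ.filter fun S : Finset E ↦ e₀ ∉ S ∧ f₀ ∈ S.biUnion t).image slack)
  have hC : C.Nonempty := insert_nonempty _ _
  refine ⟨C.min' hC, ((C.min'_le _ (mem_insert_self _ _)).trans (min_le_left _ _)),
    ((C.min'_le _ (mem_insert_self _ _)).trans (min_le_right _ _)), fun S heS hfS ↦ ?_, ?_⟩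
  · rw [← le_tsub_iff_left (h S)]
    exact C.min'_le _
      (mem_insert_of_mem (mem_image_of_mem _ (mem_filter.2 ⟨mem_univ _, heS, hfS⟩)))
  · rcases mem_insert.1 (C.min'_mem hC) with hδ | hδ
    · rcases min_choice (p e₀) (q f₀) with hm | hm <;> rw [hm] at hδ <;> simp [hδ]
    · obtain ⟨S, hS, hδ⟩ := mem_image.1 hδ
      rw [mem_filter] at hS
      exact Or.inr (Or.inr ⟨S, hS.2.1, hS.2.2, hδ ▸ add_tsub_cancel_of_le (h S)⟩)

/-- Transferring the maximal amount along an edge `(e₀, f₀)` either empties `e₀` or `f₀`, or makes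
some set tight, after which the problem splits. -/
theorem HallCondition.exists_isTransportPlan_of_smaller [Fintype E] [Fintype F] [DecidableEq E]
    (h : HallCondition t p q) (htot : ∑ e, p e = ∑ f, q f) (hp0 : p ≠ 0)
    (ih : ∀ (p₁ : E → M) (q₁ : F → M), p₁ ≤ p → q₁ ≤ q →
      #{e | p₁ e ≠ 0} < #{e | p e ≠ 0} ∨ #{f | q₁ f ≠ 0} < #{f | q f ≠ 0} →
      HallCondition t p₁ q₁ → ∑ e, p₁ e = ∑ f, q₁ f → ∃ k, IsTransportPlan t p₁ q₁ k) :
    ∃ k, IsTransportPlan t p q k := by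
  obtain ⟨e₀, he₀⟩ : ∃ e₀, p e₀ ≠ 0 := Function.ne_iff.1 hp0
  obtain ⟨f₀, hf₀, hqf₀⟩ : ∃ f₀ ∈ t e₀, q f₀ ≠ 0 :=
    exists_ne_zero_of_sum_ne_zero fun h0 ↦ he₀ (by simpa [h0] using h {e₀})
  obtain ⟨δ, hδp, hδq, hδS, hδ⟩ := h.exists_maximal_transfer e₀ f₀
  set p' : E → M := p - Pi.single e₀ δ
  set q' : F → M := q - Pi.single f₀ δ
  have h' : HallCondition t p' q' := h.tsub_single hf₀ hδp hδq hδS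
  have htot' : ∑ e, p' e = ∑ f, q' f := sum_tsub_single_eq_sum_tsub_single hδp hδq htot
  obtain ⟨k, hk⟩ : ∃ k, IsTransportPlan t p' q' k := by
    by_cases hz : p' e₀ = 0 ∨ q' f₀ = 0
    · refine ih _ _ tsub_le_self tsub_le_self ?_ h' htot'
      exact hz.imp (card_filter_ne_zero_lt_of_le tsub_le_self · he₀)
        (card_filter_ne_zero_lt_of_le tsub_le_self · hqf₀)
    rw [not_or] at hz
    obtain ⟨S, heS, hfS, hS⟩ : ∃ S : Finset E, e₀ ∉ S ∧ f₀ ∈ S.biUnion t ∧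
        ∑ e ∈ S, p e + δ = ∑ f ∈ S.biUnion t, q f := by
      rcases hδ with hδ | hδ | hS
      · exact absurd (by simp [p', hδ]) hz.1
      · exact absurd (by simp [q', hδ]) hz.2
      · exact hS
    have hpS := sum_tsub_single_add hδp S
    have hqS := sum_tsub_single_add hδq (S.biUnion t)
    rw [if_neg heS, add_zero] at hpS
    rw [if_pos hfS, ← hS, ← hpS] at hqS
    have tight := add_right_cancel hqS
    refine h'.exists_isTransportPlan_of_tight htot' (fun p₁ q₁ hp₁ hq₁ hlt ↦ ih p₁ q₁
      (hp₁.trans tsub_le_self) (hq₁.trans tsub_le_self)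
      (.inl (hlt.trans_le (card_filter_ne_zero_le_of_le tsub_le_self)))) tight heS hz.1
      fun h0 ↦ hz.2 (sum_eq_zero_iff.1 (tight ▸ h0) f₀ hfS)
  refine ⟨k + Pi.single e₀ (Pi.single f₀ δ), ?_⟩
  have := hk.add (isTransportPlan_single hf₀ δ)
  rwa [tsub_add_cancel_of_le (single_le_of_le hδp),
    tsub_add_cancel_of_le (single_le_of_le hδq)] at this

theorem HallCondition.exists_isTransportPlan [Fintype E] [Fintype F] [DecidableEq E]
    (h : HallCondition t p q) (htot : ∑ e, p e = ∑ f, q f) : ∃ k, IsTransportPlan t p q k := by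
  induction hn : #{e | p e ≠ 0} + #{f | q f ≠ 0} using Nat.strong_induction_on
    generalizing p q with
  | _ n ih =>
  by_cases hp0 : p = 0
  · subst hp0
    obtain rfl : q = 0 := funext fun f ↦ sum_eq_zero_iff.1 (by simpa using htot.symm) f (mem_univ f)
    exact ⟨0, ⟨by simp, by simp, by simp⟩⟩
  refine h.exists_isTransportPlan_of_smaller htot hp0 fun p₁ q₁ hp hq hlt h₁ tot₁ ↦ ?_
  have := card_filter_ne_zero_le_of_le hp
  have := card_filter_ne_zero_le_of_le hq
  exact ih _ (by omega) h₁ tot₁ rfl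

end TransportPlan

section StochDom

variable {E : Type*} [MeasurableSpace E] [MeasurableSingletonClass E] [Preorder E]

theorem StochDom.measure_le_of_isUpperSet [Countable E] {μ ν : Measure E} (h : StochDom μ ν)
    {U : Set E} (hU : IsUpperSet U) : μ U ≤ ν U := by
  obtain ⟨κ, hκ, rfl, rfl, hle⟩ := h
  have hU' : MeasurableSet U := U.to_countable.measurableSet
  rw [Measure.map_apply measurable_fst hU', Measure.map_apply measurable_snd hU']
  have hae : ∀ᵐ z ∂κ, z.1 ≤ z.2 :=
    (ae_iff_measure_eq (Set.to_countable _).measurableSet.nullMeasurableSet).2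
      (by rw [hle, measure_univ])
  exact measure_mono_ae (hae.mono fun z hz h₁ ↦ hU hz h₁)

theorem IsTransportPlan.stochDom [Fintype E] [DecidableEq E] [DecidableLE E] {μ ν : Measure E}
    [IsProbabilityMeasure μ] [IsProbabilityMeasure ν] {k : E → E → ℝ≥0}
    (hk : IsTransportPlan (fun x ↦ univ.filter (x ≤ ·)) (fun x ↦ (μ {x}).toNNReal)
      (fun y ↦ (ν {y}).toNNReal) k) : StochDom μ ν := by
  have hμ (x : E) : ((μ {x}).toNNReal : ℝ≥0∞) = μ {x} := ENNReal.coe_toNNReal (measure_ne_top _ _)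
  have hν (y : E) : ((ν {y}).toNNReal : ℝ≥0∞) = ν {y} := ENNReal.coe_toNNReal (measure_ne_top _ _)
  let w (z : E × E) : ℝ≥0∞ := k z.1 z.2
  have hw : ∑ z, w z = 1 := by
    calc ∑ z, w z = ∑ x, μ {x} := by
          rw [Fintype.sum_prod_type]
          refine sum_congr rfl fun x _ ↦ ?_
          rw [← hμ, ← hk.sum_row x, ENNReal.ofNNReal_finsetSum]
      _ = 1 := by rw [sum_measure_singleton, coe_univ, measure_univ]
  let P := PMF.ofFintype w hw
  refine ⟨P.toMeasure, inferInstance, ?_, ?_, ?_⟩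
  · rw [PMF.toMeasure_map _ P measurable_fst, ← μ.toPMF_toMeasure]
    congr 1
    ext x
    rw [PMF.map_apply, tsum_fintype, Fintype.sum_prod_type, Measure.toPMF_apply, ← hμ,
      ← hk.sum_row x, ENNReal.ofNNReal_finsetSum, sum_comm]
    exact sum_congr rfl fun y _ ↦
      (Fintype.sum_eq_single x fun x' hx' ↦ if_neg (Ne.symm hx')).trans (if_pos rfl)
  · rw [PMF.toMeasure_map _ P measurable_snd, ← ν.toPMF_toMeasure]
    congr 1
    ext y
    rw [PMF.map_apply, tsum_fintype, Fintype.sum_prod_type, Measure.toPMF_apply, ← hν,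
      ← hk.sum_col y, ENNReal.ofNNReal_finsetSum]
    exact sum_congr rfl fun x _ ↦
      (Fintype.sum_eq_single y fun y' hy' ↦ if_neg (Ne.symm hy')).trans (if_pos rfl)
  · rw [PMF.toMeasure_apply_eq_one_iff _ (Set.to_countable _).measurableSet]
    intro z hz
    simpa using hk.mem_of_ne_zero z.1 z.2 (by simpa [P, w] using hz)

theorem stochDom_of_forall_isUpperSet_s6 [Finite E] {μ ν : Measure E} [IsProbabilityMeasure μ]
    [IsProbabilityMeasure ν] (h : ∀ U, IsUpperSet U → μ U ≤ ν U) : StochDom μ ν := by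
  classical
  have := Fintype.ofFinite E
  have hsum (m : Measure E) [IsFiniteMeasure m] (S : Finset E) :
      ((∑ x ∈ S, (m {x}).toNNReal : ℝ≥0) : ℝ≥0∞) = m S := by
    simp_rw [ENNReal.ofNNReal_finsetSum, ENNReal.coe_toNNReal (measure_ne_top _ _),
      sum_measure_singleton]
  have hall : HallCondition (fun x ↦ univ.filter (x ≤ ·)) (fun x ↦ (μ {x}).toNNReal)
      (fun y ↦ (ν {y}).toNNReal) := by
    intro S
    rw [← ENNReal.coe_le_coe, hsum μ, hsum ν]
    refine (measure_mono fun x hx ↦ ?_).trans (h _ fun a b hab ha ↦ ?_)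
    · simpa using ⟨x, hx, le_rfl⟩
    · obtain ⟨x, hx, hxa⟩ : ∃ x ∈ S, x ≤ a := by simpa using ha
      simpa using ⟨x, hx, hxa.trans hab⟩
  obtain ⟨k, hk⟩ := hall.exists_isTransportPlan <| ENNReal.coe_injective <| by
    rw [hsum, hsum, coe_univ, measure_univ, measure_univ]
  exact hk.stochDom

end StochDom

section ProductDomination

theorem measure_iUnion_le_of_stochDom {Λ Φ α : Type*} [Finite Λ] [LinearOrder α]
    [MeasurableSpace α] [Countable α] [MeasurableSingletonClass α] {ν : Measure α}
    {ρ : Measure (Φ → α)} (hdom : ∀ a, StochDom ν (ρ.map (· a))) (T : Λ → Set α)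
    (hT : ∀ ℓ, IsUpperSet (T ℓ)) (a : Λ → Φ) :
    ν (⋃ ℓ, T ℓ) ≤ ρ {c | ∃ ℓ, c (a ℓ) ∈ T ℓ} := by
  cases isEmpty_or_nonempty Λ
  · simp
  -- upper sets of a linear order form a chain, so the union is one of them
  obtain ⟨ℓ₀, hℓ₀⟩ := Finite.exists_min fun ℓ ↦ (⟨T ℓ, hT ℓ⟩ : UpperSet α)
  have hU : (⋃ ℓ, T ℓ) = T ℓ₀ :=
    (Set.iUnion_subset fun ℓ ↦ UpperSet.coe_subset_coe.2 (hℓ₀ ℓ)).antisymm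
      (Set.subset_iUnion T ℓ₀)
  rw [hU]
  calc ν (T ℓ₀) ≤ ρ.map (· (a ℓ₀)) (T ℓ₀) := (hdom _).measure_le_of_isUpperSet (hT ℓ₀)
    _ = ρ ((· (a ℓ₀)) ⁻¹' T ℓ₀) :=
      Measure.map_apply (measurable_pi_apply _) (Set.to_countable _).measurableSet
    _ ≤ ρ {c | ∃ ℓ, c (a ℓ) ∈ T ℓ} := measure_mono fun c hc ↦ ⟨ℓ₀, hc⟩

variable {B α : Type*} [DecidableEq B] {Φ : B → Type*}

/-- In the hybrid argument below, `(x b).1` samples `ν b` and `(x b).2` samples `ρ b`. -/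
def hybrid (s : Finset B) (x : ∀ b, α × (Φ b → α)) (ℓ : ∀ b, Φ b) : B → α :=
  fun b ↦ if b ∈ s then (x b).2 (ℓ b) else (x b).1

theorem hybrid_empty (x : ∀ b, α × (Φ b → α)) (ℓ : ∀ b, Φ b) :
    hybrid ∅ x ℓ = fun b ↦ (x b).1 := by
  ext b; simp [hybrid]

theorem hybrid_univ [Fintype B] (x : ∀ b, α × (Φ b → α)) (ℓ : ∀ b, Φ b) :
    hybrid univ x ℓ = fun b ↦ (x b).2 (ℓ b) := by
  ext b; simp [hybrid]

theorem hybrid_update_of_notMem {s : Finset B} {b₀ : B} (hb₀ : b₀ ∉ s)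
    (x : ∀ b, α × (Φ b → α)) (ξ : α × (Φ b₀ → α)) (ℓ : ∀ b, Φ b) :
    hybrid s (Function.update x b₀ ξ) ℓ = Function.update (hybrid s x ℓ) b₀ ξ.1 := by
  ext b
  by_cases hb : b = b₀
  · subst hb; simp [hybrid, hb₀]
  · simp [hybrid, hb]

theorem hybrid_insert_update (s : Finset B) (b₀ : B) (x : ∀ b, α × (Φ b → α))
    (ξ : α × (Φ b₀ → α)) (ℓ : ∀ b, Φ b) :
    hybrid (insert b₀ s) (Function.update x b₀ ξ) ℓ =
      Function.update (hybrid s x ℓ) b₀ (ξ.2 (ℓ b₀)) := by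
  ext b
  by_cases hb : b = b₀
  · subst hb; simp [hybrid]
  · simp [hybrid, hb]

variable [Fintype B] [LinearOrder α] [MeasurableSpace α] [Countable α]
  [MeasurableSingletonClass α] [∀ b, Fintype (Φ b)]
  {ν : B → Measure α} {ρ : ∀ b, Measure (Φ b → α)} [∀ b, IsProbabilityMeasure (ν b)]
  [∀ b, IsProbabilityMeasure (ρ b)] {W : (∀ b, Φ b) → Set (B → α)}

theorem lmarginal_indicator_hybrid_le (hdom : ∀ b a, StochDom (ν b) ((ρ b).map (· a)))
    (hW : ∀ ℓ, IsUpperSet (W ℓ)) (s : Finset B) :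
    ∫⋯∫⁻_s, {x | ∃ ℓ, hybrid ∅ x ℓ ∈ W ℓ}.indicator 1 ∂(fun b ↦ (ν b).prod (ρ b)) ≤
      ∫⋯∫⁻_s, {x | ∃ ℓ, hybrid s x ℓ ∈ W ℓ}.indicator 1 ∂(fun b ↦ (ν b).prod (ρ b)) := by
  induction s using Finset.induction_on with
  | empty => exact le_rfl
  | insert b₀ s hb₀ ih =>
    have step (x : ∀ b, α × (Φ b → α)) :
        ∫⁻ ξ, {x | ∃ ℓ, hybrid s x ℓ ∈ W ℓ}.indicator 1 (Function.update x b₀ ξ)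
          ∂(ν b₀).prod (ρ b₀) ≤
        ∫⁻ ξ, {x | ∃ ℓ, hybrid (insert b₀ s) x ℓ ∈ W ℓ}.indicator 1 (Function.update x b₀ ξ)
          ∂(ν b₀).prod (ρ b₀) := by
      classical
      let T ℓ := {y | Function.update (hybrid s x ℓ) b₀ y ∈ W ℓ}
      have hT ℓ : IsUpperSet (T ℓ) := fun y y' hyy' hy ↦ hW ℓ (Function.update_mono hyy') hy
      have e₁ : (fun ξ ↦ {x | ∃ ℓ, hybrid s x ℓ ∈ W ℓ}.indicator 1 (Function.update x b₀ ξ)) =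
          (Prod.fst ⁻¹' ⋃ ℓ, T ℓ).indicator (1 : α × (Φ b₀ → α) → ℝ≥0∞) := by
        ext ξ
        simp [Set.indicator_apply, hybrid_update_of_notMem hb₀, T]
      have e₂ : (fun ξ ↦ {x | ∃ ℓ, hybrid (insert b₀ s) x ℓ ∈ W ℓ}.indicator 1
            (Function.update x b₀ ξ)) =
          (Prod.snd ⁻¹' {c | ∃ ℓ, c (ℓ b₀) ∈ T ℓ}).indicator
            (1 : α × (Φ b₀ → α) → ℝ≥0∞) := by
        ext ξ
        simp [Set.indicator_apply, hybrid_insert_update, T]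
      rw [e₁, e₂, lintegral_indicator_one (Set.to_countable _).measurableSet,
        lintegral_indicator_one (Set.to_countable _).measurableSet,
        ← Measure.map_apply measurable_fst (Set.to_countable _).measurableSet,
        ← Measure.map_apply measurable_snd (Set.to_countable _).measurableSet,
        Measure.map_fst_prod, Measure.map_snd_prod, measure_univ, measure_univ, one_smul,
        one_smul]
      exact measure_iUnion_le_of_stochDom (hdom b₀) T hT (· b₀)
    calc _ ≤ ∫⋯∫⁻_insert b₀ s, {x | ∃ ℓ, hybrid s x ℓ ∈ W ℓ}.indicator 1
            ∂(fun b ↦ (ν b).prod (ρ b)) :=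
          lmarginal_le_of_subset (subset_insert _ _) (measurable_of_countable _)
            (measurable_of_countable _) ih
      _ ≤ _ := by
        rw [lmarginal_insert' _ (measurable_of_countable _) hb₀,
          lmarginal_insert' _ (measurable_of_countable _) hb₀]
        exact lmarginal_mono step

theorem pi_iUnion_le_pi_of_stochDom (hdom : ∀ b a, StochDom (ν b) ((ρ b).map (· a)))
    (hW : ∀ ℓ, IsUpperSet (W ℓ)) :
    Measure.pi ν (⋃ ℓ, W ℓ) ≤ Measure.pi ρ {z | ∃ ℓ, (fun b ↦ z b (ℓ b)) ∈ W ℓ} := by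
  have h := lintegral_le_of_lmarginal_le univ (measurable_of_countable _)
    (measurable_of_countable _) (lmarginal_indicator_hybrid_le hdom hW univ)
  rw [lintegral_indicator_one (Set.to_countable _).measurableSet,
    lintegral_indicator_one (Set.to_countable _).measurableSet] at h
  have e₁ : {x | ∃ ℓ, hybrid ∅ x ℓ ∈ W ℓ} = (fun x b ↦ (x b).1) ⁻¹' ⋃ ℓ, W ℓ := by
    ext x; simp [hybrid_empty]
  have e₂ : {x | ∃ ℓ, hybrid univ x ℓ ∈ W ℓ} =
      (fun x b ↦ (x b).2) ⁻¹' {z | ∃ ℓ, (fun b ↦ z b (ℓ b)) ∈ W ℓ} := by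
    ext x; simp [hybrid_univ]
  rw [e₁, e₂, ← Measure.map_apply (measurable_of_countable _) (Set.to_countable _).measurableSet,
    ← Measure.map_apply (measurable_of_countable _) (Set.to_countable _).measurableSet,
    Measure.pi_map_pi fun _ ↦ measurable_fst.aemeasurable,
    Measure.pi_map_pi fun _ ↦ measurable_snd.aemeasurable] at h
  simpa using h

end ProductDomination

section Lift

variable {A B α : Type*} [LinearOrder α] [OrderBot α] (π : A → B)

def pushdown [Fintype A] [DecidableEq B] (x : A → α) : B → α :=
  fun b ↦ (univ.filter fun c ↦ π c = b).sup x

open Classical in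
noncomputable def liftAlong (ℓ : ∀ b, {a // π a = b}) (v : B → α) : A → α :=
  fun a ↦ if ℓ (π a) = ⟨a, rfl⟩ then v (π a) else ⊥

def flatten (z : ∀ b, {a // π a = b} → α) : A → α :=
  fun a ↦ z (π a) ⟨a, rfl⟩

variable {π}

theorem liftAlong_mono (ℓ : ∀ b, {a // π a = b}) : Monotone (liftAlong (α := α) π ℓ) :=
  fun v w hvw a ↦ by unfold liftAlong; split_ifs <;> simp [hvw (π a)]

theorem liftAlong_le_flatten (ℓ : ∀ b, {a // π a = b}) (z : ∀ b, {a // π a = b} → α) :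
    liftAlong π ℓ (fun b ↦ z b (ℓ b)) ≤ flatten π z := by
  intro a
  unfold liftAlong flatten
  split_ifs with h
  · exact (congrArg (z (π a)) h).le
  · exact bot_le

theorem exists_le_liftAlong_pushdown [Fintype A] [DecidableEq B] (hπ : Function.Surjective π)
    {x : A → α} (hx : ∀ a a', π a = π a' → x a ≠ ⊥ → x a' ≠ ⊥ → a = a') :
    ∃ ℓ, x ≤ liftAlong π ℓ (pushdown π x) := by
  have hmax (b : B) : ∃ a : {a // π a = b}, ∀ a' : A, π a' = b → x a' ≤ x a := by
    obtain ⟨a₀, ha₀⟩ := hπ b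
    obtain ⟨a, ha, hxa⟩ :=
      (univ.filter fun c ↦ π c = b).exists_max_image x ⟨a₀, by simpa using ha₀⟩
    exact ⟨⟨a, by simpa using ha⟩, fun a' ha' ↦ hxa a' (by simpa using ha')⟩
  choose ℓ hℓ using hmax
  refine ⟨ℓ, fun a ↦ ?_⟩
  unfold liftAlong pushdown
  split_ifs with h
  · exact le_sup (by simp)
  · by_contra hxa
    have hne : x (ℓ (π a)) ≠ ⊥ := ne_bot_of_le_ne_bot (by simpa using hxa) (hℓ _ a rfl)
    exact h (Subtype.ext (hx _ a (ℓ (π a)).2 hne (by simpa using hxa)))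

end Lift

section Assembly

variable {A B α : Type*} [Fintype A] [Fintype B] [DecidableEq B] [LinearOrder α] [OrderBot α]
  [MeasurableSpace α] [Countable α] [MeasurableSingletonClass α] {π : A → B}

theorem measure_le_pi_preimage_flatten (hπ : Function.Surjective π) {ν : B → Measure α}
    {ρ : ∀ b, Measure ({a // π a = b} → α)} [∀ b, IsProbabilityMeasure (ν b)]
    [∀ b, IsProbabilityMeasure (ρ b)] (hdom : ∀ b a, StochDom (ν b) ((ρ b).map (· a)))
    {μ : Measure (A → α)} [IsProbabilityMeasure μ]
    (hlift : μ {x | ∀ a a', π a = π a' → x a ≠ ⊥ → x a' ≠ ⊥ → a = a'} = 1)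
    (hpush : StochDom (μ.map (pushdown π)) (Measure.pi ν)) {U : Set (A → α)}
    (hU : IsUpperSet U) : μ U ≤ Measure.pi ρ (flatten π ⁻¹' U) := by
  let W (ℓ : ∀ b, {a // π a = b}) : Set (B → α) := liftAlong π ℓ ⁻¹' U
  have hW ℓ : IsUpperSet (W ℓ) := hU.preimage (liftAlong_mono ℓ)
  have hae : ∀ᵐ x ∂μ, x ∈ U → x ∈ pushdown π ⁻¹' ⋃ ℓ, W ℓ := by
    have hL : ∀ᵐ x ∂μ, ∀ a a', π a = π a' → x a ≠ ⊥ → x a' ≠ ⊥ → a = a' :=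
      (ae_iff_measure_eq (Set.to_countable _).measurableSet.nullMeasurableSet).2
        (by rw [hlift, measure_univ])
    filter_upwards [hL] with x hx hxU
    obtain ⟨ℓ, hℓ⟩ := exists_le_liftAlong_pushdown hπ hx
    exact Set.mem_iUnion.2 ⟨ℓ, hU hℓ hxU⟩
  calc μ U ≤ μ (pushdown π ⁻¹' ⋃ ℓ, W ℓ) := measure_mono_ae hae
    _ = μ.map (pushdown π) (⋃ ℓ, W ℓ) :=
      (Measure.map_apply (measurable_of_countable _) (Set.to_countable _).measurableSet).symm
    _ ≤ Measure.pi ν (⋃ ℓ, W ℓ) := hpush.measure_le_of_isUpperSet (isUpperSet_iUnion hW)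
    _ ≤ Measure.pi ρ {z | ∃ ℓ, (fun b ↦ z b (ℓ b)) ∈ W ℓ} := pi_iUnion_le_pi_of_stochDom hdom hW
    _ ≤ Measure.pi ρ (flatten π ⁻¹' U) :=
      measure_mono fun z ⟨ℓ, hz⟩ ↦ hU (liftAlong_le_flatten ℓ z) hz

end Assembly

theorem stmt6_general (N : ℕ)
    {A B : Type*} [Fintype A] [Fintype B] [DecidableEq B]
    (π : A → B) (hπ : Function.Surjective π)
    (ν : B → Measure (Fin (N + 1)))
    (ρ : (b : B) → Measure ({a : A // π a = b} → Fin (N + 1)))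
    [∀ b, IsProbabilityMeasure (ν b)] [∀ b, IsProbabilityMeasure (ρ b)]
    (hdom : ∀ b : B, ∀ a : {a : A // π a = b},
      StochDom (ν b) ((ρ b).map fun x => x a))
    (μ : Measure (A → Fin (N + 1))) [IsProbabilityMeasure μ]
    (hlift : μ {x | ∀ a a' : A, π a = π a' → x a ≠ 0 → x a' ≠ 0 → a = a'} = 1)
    (hpush : StochDom
      (μ.map fun x b => (Finset.univ.filter fun c => π c = b).sup x)
      (Measure.pi ν)) :
    StochDom μ
      ((Measure.pi ρ).map fun f a => f (π a) ⟨a, rfl⟩) := by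
  have := Measure.isProbabilityMeasure_map (μ := Measure.pi ρ)
    (measurable_of_countable fun f a ↦ f (π a) ⟨a, rfl⟩).aemeasurable
  refine stochDom_of_forall_isUpperSet_s6 fun U hU ↦ ?_
  rw [Measure.map_apply (measurable_of_countable _) (Set.to_countable U).measurableSet]
  exact measure_le_pi_preimage_flatten hπ hdom hlift hpush hU

/-- **Corollary (independent columns).**  If for each `b` the measure `ν_b` is dominated
by every marginal of `ρ_b`, and `μ` is a `π`-lift whose pushdown is dominated by
`⊗_b ν_b`, then `μ` is dominated by `⊗_b ρ_b`. -/
theorem stmt6 (N : ℕ)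
    {A B : Type*} [Fintype A] [Nonempty A] [DecidableEq A] [Fintype B] [Nonempty B]
    [DecidableEq B]
    (π : A → B) (hπ : Function.Surjective π)
    (ν : B → Measure (Fin (N + 1)))
    (ρ : (b : B) → Measure ({a : A // π a = b} → Fin (N + 1)))
    [∀ b, IsProbabilityMeasure (ν b)] [∀ b, IsProbabilityMeasure (ρ b)]
    (hdom : ∀ b : B, ∀ a : {a : A // π a = b},
      StochDom (ν b) ((ρ b).map fun x => x a))
    (μ : Measure (A → Fin (N + 1))) [IsProbabilityMeasure μ]
    (hlift : μ {x | ∀ a a' : A, π a = π a' → x a ≠ 0 → x a' ≠ 0 → a = a'} = 1)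
    (hpush : StochDom
      (μ.map fun x b => (Finset.univ.filter fun c => π c = b).sup x)
      (Measure.pi ν)) :
    StochDom μ
      ((Measure.pi ρ).map fun f a => f (π a) ⟨a, rfl⟩) :=
  stmt6_general N π hπ ν ρ hdom μ hlift hpush
end
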